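/- For every non-degenerate planar tree b, the decompositions of b as b = E ∝ c, where c is a non-degenerate planar tree with k leaves and E is a k-tuple of non-degenerate planar trees grafted onto the leaves of c, are finite in number. Moreover b = (b) ∝ ∘ (where ∘ has one leaf) and b = E ∝ b with E = (∘,…,∘) are always among these decompositions. -/

import Mathlib

inductive PTree : Type
  | node : List PTree → PTree

namespace PTree

instance : Inhabited PTree := ⟨node []⟩

/-- the single-leaf tree ∘ -/
def leaf : PTree := node []

/-- number of leaves ‖b‖ -/
def leaves : PTree → ℕ
  | node ts => if ts.isEmpty then 1 else (ts.attach.map fun t => leaves t.1).sum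
decreasing_by simp only [PTree.node.sizeOf_spec]; have := List.sizeOf_lt_of_mem t.2; omega


/-- number of internal vertices |b| -/
def internals : PTree → ℕ
  | node ts => if ts.isEmpty then 0 else 1 + (ts.attach.map fun t => internals t.1).sum
decreasing_by simp only [PTree.node.sizeOf_spec]; have := List.sizeOf_lt_of_mem t.2; omega


/-- total number of vertices N(b) -/
def Ntot (b : PTree) : ℕ := b.leaves + b.internals

/-- non-degenerate: every internal vertex has at least two children -/
def ND : PTree → Prop
  | node ts => ts.isEmpty ∨ (2 ≤ ts.length ∧ ∀ t ∈ ts.attach, ND t.1)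
decreasing_by simp only [PTree.node.sizeOf_spec]; have := List.sizeOf_lt_of_mem t.2; omega


/-- the list of numbers of children of the internal vertices of b -/
def childCounts : PTree → List ℕ
  | node ts => if ts.isEmpty then [] else ts.length :: (ts.attach.map fun t => childCounts t.1).flatten
decreasing_by simp only [PTree.node.sizeOf_spec]; have := List.sizeOf_lt_of_mem t.2; omega


mutual
/-- graft trees from the list E onto the successive leaves of b (left to right);
returns the grafted tree together with the unused suffix of E. -/
def graft : PTree → List PTree → PTree × List PTree
  | node ts, E =>
    if ts.isEmpty then (E.headI, E.tail)
    else
      let p := graftL ts E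
      (node p.1, p.2)
/-- graft trees from the list E onto the leaves of the forest l -/
def graftL : List PTree → List PTree → List PTree × List PTree
  | [], E => ([], E)
  | t :: ts, E =>
    let p := graft t E
    let q := graftL ts p.2
    (p.1 :: q.1, q.2)
end

/-- E ∝ b : graft the tuple E onto the leaves of b -/
def graftT (b : PTree) (E : List PTree) : PTree := (b.graft E).1

mutual
/-- the list of all decompositions b = E ∝ c, as pairs (c, E) -/
def decomps : PTree → List (PTree × List PTree)
  | node ts =>
    (leaf, [node ts]) ::
      (if ts.isEmpty then []
       else (decompsL ts).map fun p => (node p.1, p.2))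
/-- decompositions of a forest: pairs (list of bases, concatenated grafted tuples) -/
def decompsL : List PTree → List (List PTree × List PTree)
  | [] => [([], [])]
  | t :: ts =>
    (decomps t).flatMap fun p => (decompsL ts).map fun q => (p.1 :: q.1, p.2 ++ q.2)
end

theorem leaves_pos : ∀ b : PTree, 0 < b.leaves
  | node ts => by
    show 0 < leaves (node ts)
    unfold leaves
    split
    · exact one_pos
    · rename_i h
      have hne : ts ≠ [] := by simpa [List.isEmpty_iff] using h
      obtain ⟨t, ts', rfl⟩ := List.exists_cons_of_ne_nil hne
      have := leaves_pos t
      simp only [List.attach_cons, List.map_cons, List.sum_cons]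
      positivity

end PTree

namespace PTree


theorem leaves_node (ts : List PTree) :
    leaves (node ts) = if ts.isEmpty then 1 else (ts.map leaves).sum := by
  rw [leaves]; congr 1; rw [List.attach_map_val]

theorem graftL_fst_length : ∀ (ts E : List PTree), (graftL ts E).1.length = ts.length
  | [], E => by simp [graftL]
  | t :: ts, E => by
    rw [graftL]
    simp [graftL_fst_length ts]

mutual
theorem graft_append : ∀ (t : PTree) (E1 E2 : List PTree), E1.length = t.leaves →
    graft t (E1 ++ E2) = ((graft t E1).1, E2)
  | node ts, E1, E2, h => by
    rw [leaves_node] at h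
    by_cases hts : ts.isEmpty
    · rw [if_pos hts] at h
      obtain ⟨a, ha⟩ := List.length_eq_one_iff.mp h
      subst ha
      simp [graft, hts]
    · rw [if_neg hts] at h
      rw [graft, if_neg hts, graft, if_neg hts]
      simp only
      rw [graftL_append ts E1 E2 h]
  decreasing_by simp only [PTree.node.sizeOf_spec]; omega
theorem graftL_append : ∀ (ts : List PTree) (E1 E2 : List PTree),
    E1.length = (ts.map leaves).sum →
    graftL ts (E1 ++ E2) = ((graftL ts E1).1, E2)
  | [], E1, E2, h => by
    simp at h; subst h; simp [graftL]
  | t :: ts, E1, E2, h => by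
    simp only [List.map_cons, List.sum_cons] at h
    set A := E1.take t.leaves with hA
    set B := E1.drop t.leaves with hB
    have hAB : E1 = A ++ B := (List.take_append_drop _ _).symm
    have hAl : A.length = t.leaves := by
      rw [hA, List.length_take]; omega
    have hBl : B.length = (ts.map leaves).sum := by
      rw [hB, List.length_drop]; omega
    rw [hAB, graftL, graftL, List.append_assoc,
      graft_append t A (B ++ E2) hAl, graft_append t A B hAl]
    simp only
    rw [graftL_append ts B E2 hBl]
end

mutual
theorem mem_decomps : ∀ (c : PTree) (E : List PTree), E.length = c.leaves →
    (c, E) ∈ decomps ((graft c E).1)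
  | node ts, E, h => by
    rw [leaves_node] at h
    by_cases hts : ts.isEmpty
    · rw [if_pos hts] at h
      obtain ⟨a, ha⟩ := List.length_eq_one_iff.mp h
      subst ha
      have : ts = [] := List.isEmpty_iff.mp hts
      subst this
      rw [graft]
      simp only [List.isEmpty_nil, if_pos trivial, List.headI]
      obtain ⟨us⟩ := a
      rw [decomps]
      exact List.mem_cons_self
    · rw [if_neg hts] at h
      rw [graft, if_neg hts]
      simp only
      rw [decomps]
      have hlen : (graftL ts E).1.length = ts.length := graftL_fst_length ts E
      have hne : ¬ (graftL ts E).1.isEmpty := by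
        rw [List.isEmpty_iff, ← List.length_eq_zero_iff, hlen]
        rw [List.isEmpty_iff, ← List.length_eq_zero_iff] at hts
        exact hts
      rw [if_neg hne]
      refine List.mem_cons_of_mem _ ?_
      exact List.mem_map.mpr ⟨(ts, E), mem_decompsL ts E h, rfl⟩
  decreasing_by simp only [PTree.node.sizeOf_spec]; omega
theorem mem_decompsL : ∀ (cs E : List PTree), E.length = (cs.map leaves).sum →
    (cs, E) ∈ decompsL ((graftL cs E).1)
  | [], E, h => by
    simp at h; subst h; simp [graftL, decompsL]
  | t :: ts, E, h => by
    simp only [List.map_cons, List.sum_cons] at h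
    set A := E.take t.leaves with hA
    set B := E.drop t.leaves with hB
    have hAB : E = A ++ B := (List.take_append_drop _ _).symm
    have hAl : A.length = t.leaves := by rw [hA, List.length_take]; omega
    have hBl : B.length = (ts.map leaves).sum := by rw [hB, List.length_drop]; omega
    rw [hAB, graftL, graft_append t A B hAl]
    simp only
    rw [decompsL]
    refine List.mem_flatMap.mpr ⟨(t, A), mem_decomps t A hAl, ?_⟩
    exact List.mem_map.mpr ⟨(ts, B), mem_decompsL ts B hBl, rfl⟩
end

mutual
theorem graft_replicate : ∀ (t : PTree) (E : List PTree),
    graft t (List.replicate t.leaves leaf ++ E) = (t, E)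
  | node ts, E => by
    rw [leaves_node]
    by_cases hts : ts.isEmpty
    · have : ts = [] := List.isEmpty_iff.mp hts
      subst this
      simp [graft, leaf]
    · rw [if_neg hts, graft, if_neg hts]
      simp only
      rw [graftL_replicate ts E]
  decreasing_by simp only [PTree.node.sizeOf_spec]; omega
theorem graftL_replicate : ∀ (ts E : List PTree),
    graftL ts (List.replicate (ts.map leaves).sum leaf ++ E) = (ts, E)
  | [], E => by simp [graftL]
  | t :: ts, E => by
    simp only [List.map_cons, List.sum_cons]
    rw [List.replicate_add, List.append_assoc, graftL,
      graft_replicate t _]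
    simp only
    rw [graftL_replicate ts E]
end

theorem leaf_ND : leaf.ND := by rw [leaf, ND]; left; rfl


end PTree

/-- the set of decompositions of b as b = E ∝ c with c non-degenerate (k = ‖c‖ leaves)
and E a k-tuple of non-degenerate trees -/
def decompSet (b : PTree) : Set (PTree × List PTree) :=
  {p | p.1.ND ∧ (∀ t ∈ p.2, t.ND) ∧ p.2.length = p.1.leaves ∧ p.1.graftT p.2 = b}

/-- the decompositions b = E ∝ c are finite in number, and
b = (b) ∝ ∘ and b = (∘,…,∘) ∝ b are among them. -/
theorem decompositions_finite (b : PTree) (hb : b.ND) :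
    (decompSet b).Finite ∧ (PTree.leaf, [b]) ∈ decompSet b ∧
      (b, List.replicate b.leaves PTree.leaf) ∈ decompSet b := by
  refine ⟨?_, ?_, ?_⟩
  · apply Set.Finite.subset (List.finite_toSet (PTree.decomps b))
    rintro ⟨c, E⟩ ⟨-, -, hlen, hg⟩
    have h := PTree.mem_decomps c E hlen
    rw [PTree.graftT] at hg
    rwa [hg] at h
  · refine ⟨PTree.leaf_ND, ?_, ?_, ?_⟩
    · intro t ht; simp at ht; subst ht; exact hb
    · simp [PTree.leaf, PTree.leaves_node]
    · obtain ⟨ts⟩ := b; simp [PTree.graftT, PTree.graft, PTree.leaf]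
  · refine ⟨hb, ?_, ?_, ?_⟩
    · intro t ht; rw [List.eq_of_mem_replicate ht]; exact PTree.leaf_ND
    · simp
    · have h := PTree.graft_replicate b []
      rw [List.append_nil] at h
      rw [PTree.graftT, h]
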